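/- For all 0 ≤ s < t < T one has Γ(s,T)ᵀ E(t,s)ᵀ − E(T,s) Γ(s,t) = Γ(t,T)ᵀ. -/

import Mathlib

open MeasureTheory Matrix Topology Filter

attribute [local instance] Matrix.normedAddCommGroup Matrix.normedSpace

/-!
Splitting `[s, T]` at `t` and writing `E(T,u) = E(T,t) E(t,u)` gives the cocycle identity
`κ(s,T) = E(T,t) κ(s,t) E(T,t)ᵀ + κ(t,T)`. Since `κ` is symmetric, `Γ(s,T)ᵀ E(t,s)ᵀ = κ(s,T) E(t,T)ᵀ`
and `Γ(t,T)ᵀ = κ(t,T) E(t,T)ᵀ`, while `E(T,s) Γ(s,t) = E(T,t) κ(s,t)`; multiplying the cocycle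
identity on the right by `E(t,T)ᵀ = (E(T,t)ᵀ)⁻¹` gives the claim.
-/

/-- Typeclass search does not unfold the local instance `Matrix.normedAddCommGroup` far enough to
find the `ENormedAddMonoid` structure that `IntervalIntegrable` needs. -/
noncomputable local instance Matrix.instENormedAddMonoidReal {m n : Type*} [Fintype m]
    [Fintype n] : ENormedAddMonoid (Matrix m n ℝ) :=
  NormedAddGroup.toENormedAddMonoid

noncomputable def kalmanGramian {n m : Type*} [Fintype n] [Fintype m]
    (E : ℝ → ℝ → Matrix n n ℝ) (S : ℝ → Matrix n m ℝ) (s t : ℝ) : Matrix n n ℝ :=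
  ∫ u in s..t, E t u * S u * (S u)ᵀ * (E t u)ᵀ

theorem intervalIntegral_mul_mul_transpose {n k : Type*} [Fintype n] [Fintype k]
    (A : Matrix k n ℝ) {f : ℝ → Matrix n n ℝ} {a b : ℝ}
    (hf : IntervalIntegrable f volume a b) :
    ∫ u in a..b, A * f u * Aᵀ = A * (∫ u in a..b, f u) * Aᵀ := by
  let L : Matrix n n ℝ →ₗ[ℝ] Matrix k k ℝ :=
    { toFun := fun X => A * X * Aᵀ
      map_add' := fun X Y => by simp only [Matrix.mul_add, Matrix.add_mul]
      map_smul' := fun c X => by simp }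
  exact L.toContinuousLinearMap.intervalIntegral_comp_comm hf

section Gramian

variable {n m : Type*} [Fintype n] [Fintype m]
  {E : ℝ → ℝ → Matrix n n ℝ} {S : ℝ → Matrix n m ℝ}

theorem intervalIntegrable_kalman_integrand {c : ℝ} (hE : ContinuousOn (E c) (Set.Ici 0))
    (hS : ContinuousOn S (Set.Ici 0)) {a b : ℝ} (ha : 0 ≤ a) (hb : 0 ≤ b) :
    IntervalIntegrable (fun u => E c u * S u * (S u)ᵀ * (E c u)ᵀ) volume a b := by
  have hcont : ContinuousOn (fun u => E c u * S u * (S u)ᵀ * (E c u)ᵀ) (Set.Ici 0) := by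
    fun_prop
  exact (hcont.mono fun u hu => (le_min ha hb).trans hu.1).intervalIntegrable

theorem integral_kalman_integrand_eq_conj {s t T : ℝ}
    (hE : ContinuousOn (E t) (Set.Ici 0)) (hS : ContinuousOn S (Set.Ici 0))
    (hEmul : ∀ r s t : ℝ, 0 ≤ r → 0 ≤ s → 0 ≤ t → E t s * E s r = E t r)
    (hs : 0 ≤ s) (ht : 0 ≤ t) (hT : 0 ≤ T) :
    ∫ u in s..t, E T u * S u * (S u)ᵀ * (E T u)ᵀ =
      E T t * (∫ u in s..t, E t u * S u * (S u)ᵀ * (E t u)ᵀ) * (E T t)ᵀ := by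
  rw [← intervalIntegral_mul_mul_transpose _
    (intervalIntegrable_kalman_integrand hE hS hs ht)]
  refine intervalIntegral.integral_congr fun u hu => ?_
  have hu : 0 ≤ u := (le_min hs ht).trans hu.1
  simp only [← hEmul u t T hu ht hT, transpose_mul, Matrix.mul_assoc]

theorem kalmanGramian_eq_conj_add
    (hE : ∀ c, 0 ≤ c → ContinuousOn (E c) (Set.Ici 0)) (hS : ContinuousOn S (Set.Ici 0))
    (hEmul : ∀ r s t : ℝ, 0 ≤ r → 0 ≤ s → 0 ≤ t → E t s * E s r = E t r)
    {s t T : ℝ} (hs : 0 ≤ s) (ht : 0 ≤ t) (hT : 0 ≤ T) :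
    kalmanGramian E S s T = E T t * kalmanGramian E S s t * (E T t)ᵀ + kalmanGramian E S t T := by
  rw [kalmanGramian, ← intervalIntegral.integral_add_adjacent_intervals
    (intervalIntegrable_kalman_integrand (hE T hT) hS hs ht)
    (intervalIntegrable_kalman_integrand (hE T hT) hS ht hT),
    integral_kalman_integrand_eq_conj (hE t ht) hS hEmul hs ht hT]
  rfl

end Gramian

theorem gamma_transpose_identity_general
    {d p : ℕ}
    (S : ℝ → Matrix (Fin d) (Fin p) ℝ)
    (hS : ContinuousOn S (Set.Ici 0))
    (E : ℝ → ℝ → Matrix (Fin d) (Fin d) ℝ)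
    (hEcont : ContinuousOn (fun x : ℝ × ℝ => E x.1 x.2) (Set.Ici 0 ×ˢ Set.Ici 0))
    (hEid : ∀ t : ℝ, 0 ≤ t → E t t = 1)
    (hEmul : ∀ r s t : ℝ, 0 ≤ r → 0 ≤ s → 0 ≤ t → E t s * E s r = E t r)
    (κ Γ : ℝ → ℝ → Matrix (Fin d) (Fin d) ℝ)
    (hκ : ∀ s t : ℝ, 0 ≤ s → s ≤ t →
      κ s t = ∫ u in s..t, E t u * S u * (S u)ᵀ * (E t u)ᵀ)
    (hΓ : ∀ s t : ℝ, 0 ≤ s → s ≤ t → Γ s t = E s t * κ s t)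
    (T : ℝ)
    (hκpd : ∀ s t : ℝ, 0 ≤ s → s < t → (κ s t).IsSymm ∧ (κ s t).PosDef) :
    ∀ s t : ℝ, 0 ≤ s → s < t → t < T →
      (Γ s T)ᵀ * (E t s)ᵀ - E T s * Γ s t = (Γ t T)ᵀ := by
  intro s t hs hst htT
  have ht : 0 ≤ t := hs.trans hst.le
  have hT : 0 ≤ T := ht.trans htT.le
  have hsT : s < T := hst.trans htT
  have hE (c : ℝ) (hc : 0 ≤ c) : ContinuousOn (E c) (Set.Ici 0) :=
    hEcont.comp (Continuous.prodMk_right c).continuousOn fun u hu => ⟨hc, hu⟩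
  have hsplit : κ s T = E T t * κ s t * (E T t)ᵀ + κ t T := by
    rw [hκ s T hs hsT.le, hκ s t hs hst.le, hκ t T ht htT.le]
    exact kalmanGramian_eq_conj_add hE hS hEmul hs ht hT
  rw [hΓ s T hs hsT.le, hΓ s t hs hst.le, hΓ t T ht htT.le]
  calc (E s T * κ s T)ᵀ * (E t s)ᵀ - E T s * (E s t * κ s t)
      = κ s T * (E t T)ᵀ - E T t * κ s t := by
        rw [transpose_mul, (hκpd s T hs hsT).1.eq, Matrix.mul_assoc, ← transpose_mul,
          hEmul T s t hT hs ht, ← Matrix.mul_assoc, hEmul t s T ht hs hT]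
    _ = κ t T * (E t T)ᵀ := by
        rw [hsplit, Matrix.add_mul, Matrix.mul_assoc (E T t * κ s t), ← transpose_mul,
          hEmul t T t ht hT ht, hEid t ht, transpose_one, Matrix.mul_one,
          add_sub_cancel_left]
    _ = (E t T * κ t T)ᵀ := by rw [transpose_mul, (hκpd t T ht htT).1.eq]

/-- Lemma 3(d): for `0 ≤ s < t < T`,
`Γ(s,T)ᵀ E(t,s)ᵀ − E(T,s) Γ(s,t) = Γ(t,T)ᵀ`. -/
theorem gamma_transpose_identity
    {d p : ℕ} (hd : 1 ≤ d)
    (Q : ℝ → Matrix (Fin d) (Fin d) ℝ) (S : ℝ → Matrix (Fin d) (Fin p) ℝ)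
    (hQ : ContinuousOn Q (Set.Ici 0)) (hS : ContinuousOn S (Set.Ici 0))
    (E : ℝ → ℝ → Matrix (Fin d) (Fin d) ℝ)
    (hEcont : ContinuousOn (fun x : ℝ × ℝ => E x.1 x.2) (Set.Ici 0 ×ˢ Set.Ici 0))
    (hEid : ∀ t : ℝ, 0 ≤ t → E t t = 1)
    (hEmul : ∀ r s t : ℝ, 0 ≤ r → 0 ≤ s → 0 ≤ t → E t s * E s r = E t r)
    (hEderiv : ∀ s : ℝ, 0 ≤ s → ∀ t : ℝ, 0 ≤ t →
      HasDerivAt (fun τ => E τ s) (Q t * E t s) t)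
    (κ Γ : ℝ → ℝ → Matrix (Fin d) (Fin d) ℝ)
    (hκ : ∀ s t : ℝ, 0 ≤ s → s ≤ t →
      κ s t = ∫ u in s..t, E t u * S u * (S u)ᵀ * (E t u)ᵀ)
    (hΓ : ∀ s t : ℝ, 0 ≤ s → s ≤ t → Γ s t = E s t * κ s t)
    (T : ℝ) (hT : 0 < T)
    (hκpd : ∀ s t : ℝ, 0 ≤ s → s < t → (κ s t).IsSymm ∧ (κ s t).PosDef) :
    ∀ s t : ℝ, 0 ≤ s → s < t → t < T →
      (Γ s T)ᵀ * (E t s)ᵀ - E T s * Γ s t = (Γ t T)ᵀ :=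
  gamma_transpose_identity_general S hS E hEcont hEid hEmul κ Γ hκ hΓ T hκpd
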